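/- Let (γ_h)_{h≥0} be real numbers with Σ_{h=1}^∞ |γ_h| < ∞, and let (w_i) be i.i.d. with E w_1^4 < ∞, θ ∈ ℝ. Then Σ_{h=1}^n γ_h · (1/n)·Σ_{j=1}^{n−h}[(w_j − θ)(w_{j+h} − θ) − (E(w_1−θ))²] → 0 in probability as n → ∞. -/

import Mathlib

/-! With `X_j = w_j - θ` and `Y_j = X_j X_{j+h} - (E X₁)²`, the inner Cesàro sum is
`B_n(h) = n⁻¹ ∑_{j ≤ n-h} Y_j`. For `h ≥ 1`, `Y_j` is the centred product `X_j X_{j+h}`,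
so `E Y_j² ≤ E (X_j X_{j+h})² ≤ E X₁⁴`, and `Y_j, Y_k` are independent, hence uncorrelated,
unless `k ∈ {j-h, j, j+h}`. Therefore `E (∑_j Y_j)² ≤ 3 n E X₁⁴`, so
`E|B_n(h)| ≤ (3 E X₁⁴ / n)^{1/2}` uniformly in `h`, and
`E|∑_h γ_h B_n(h)| ≤ (∑ |γ_h|) (3 E X₁⁴ / n)^{1/2} → 0`. Markov's inequality turns this into
convergence in probability. -/

open MeasureTheory ProbabilityTheory Filter Finset

section Moments

variable {Ω ι : Type*} [MeasurableSpace Ω] {μ : Measure Ω}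

theorem integrable_sub_const_pow_four [IsFiniteMeasure μ] {f : Ω → ℝ}
    (hf : AEStronglyMeasurable f μ) (h4 : Integrable (fun ω => f ω ^ 4) μ) (c : ℝ) :
    Integrable (fun ω => (f ω - c) ^ 4) μ := by
  refine ((h4.const_mul 8).add (integrable_const (8 * c ^ 4))).mono'
    ((hf.sub aestronglyMeasurable_const).pow 4) (ae_of_all _ fun ω => ?_)
  rw [Real.norm_eq_abs, abs_of_nonneg (by positivity), Pi.add_apply]
  nlinarith [sq_nonneg (f ω - c), sq_nonneg (f ω + c), sq_nonneg (f ω ^ 2 - c ^ 2),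
    sq_nonneg ((f ω - c) ^ 2 - (f ω + c) ^ 2)]

theorem integral_abs_le_sqrt_integral_sq [IsProbabilityMeasure μ] {f : Ω → ℝ}
    (hf : MemLp f 2 μ) : ∫ ω, |f ω| ∂μ ≤ √(∫ ω, f ω ^ 2 ∂μ) := by
  have hvar := variance_nonneg |f| μ
  rw [variance_eq_sub hf.abs] at hvar
  exact Real.le_sqrt_of_sq_le (by simpa [sq_abs] using hvar)

theorem integral_abs_sum_mul_le (s : Finset ι) (c : ι → ℝ) {f : ι → Ω → ℝ}
    (hf : ∀ i ∈ s, Integrable (f i) μ) :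
    ∫ ω, |∑ i ∈ s, c i * f i ω| ∂μ ≤ ∑ i ∈ s, |c i| * ∫ ω, |f i ω| ∂μ := by
  have hint : ∀ i ∈ s, Integrable (fun ω => |c i| * |f i ω|) μ :=
    fun i hi => (hf i hi).abs.const_mul _
  calc ∫ ω, |∑ i ∈ s, c i * f i ω| ∂μ ≤ ∫ ω, ∑ i ∈ s, |c i| * |f i ω| ∂μ := by
        refine integral_mono (integrable_finsetSum s fun i hi => ((hf i hi).const_mul _)).abs
          (integrable_finsetSum s hint) fun ω => ?_
        simpa only [abs_mul] using abs_sum_le_sum_abs (fun i => c i * f i ω) s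
    _ = ∑ i ∈ s, |c i| * ∫ ω, |f i ω| ∂μ := by
        rw [integral_finsetSum s hint]
        simp only [integral_const_mul]

theorem integral_sq_sum_le_of_integral_mul_eq_zero {Y : ι → Ω → ℝ}
    (hY : ∀ j, MemLp (Y j) 2 μ) {C : ℝ} (hC : ∀ j, ∫ ω, Y j ω ^ 2 ∂μ ≤ C) (N : ι → Finset ι) {d : ℕ}
    (hN : ∀ j, #(N j) ≤ d) (horth : ∀ j k, k ∉ N j → ∫ ω, Y j ω * Y k ω ∂μ = 0)
    (s : Finset ι) :
    ∫ ω, (∑ j ∈ s, Y j ω) ^ 2 ∂μ ≤ d * C * #s := by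
  classical
  have hint : ∀ j k, Integrable (fun ω => Y j ω * Y k ω) μ :=
    fun j k => (hY j).integrable_mul (hY k)
  have hcorr : ∀ j k, ∫ ω, Y j ω * Y k ω ∂μ ≤ C := fun j k => by
    have hAMGM : ∀ ω, Y j ω * Y k ω ≤ (Y j ω ^ 2 + Y k ω ^ 2) / 2 := fun ω => by
      linarith [two_mul_le_add_sq (Y j ω) (Y k ω)]
    calc ∫ ω, Y j ω * Y k ω ∂μ ≤ ∫ ω, (Y j ω ^ 2 + Y k ω ^ 2) / 2 ∂μ :=
          integral_mono (hint j k) (((hY j).integrable_sq.add (hY k).integrable_sq).div_const 2)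
            hAMGM
      _ = ((∫ ω, Y j ω ^ 2 ∂μ) + ∫ ω, Y k ω ^ 2 ∂μ) / 2 := by
          rw [integral_div, integral_add (hY j).integrable_sq (hY k).integrable_sq]
      _ ≤ C := by linarith [hC j, hC k]
  have hrow : ∀ j ∈ s, ∑ k ∈ s, ∫ ω, Y j ω * Y k ω ∂μ ≤ d * C := fun j _ => by
    have hC0 : 0 ≤ C := (integral_nonneg fun ω => sq_nonneg (Y j ω)).trans (hC j)
    rw [← sum_filter_of_ne fun k _ hk => not_not.1 (mt (horth j k) hk)]
    calc ∑ k ∈ s with k ∈ N j, ∫ ω, Y j ω * Y k ω ∂μ ≤ #{k ∈ s | k ∈ N j} * C := by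
          simpa using sum_le_sum fun k (_ : k ∈ {k ∈ s | k ∈ N j}) => hcorr j k
      _ ≤ d * C := by
          gcongr
          exact_mod_cast (card_le_card fun k hk => (mem_filter.1 hk).2).trans (hN j)
  calc ∫ ω, (∑ j ∈ s, Y j ω) ^ 2 ∂μ = ∑ j ∈ s, ∑ k ∈ s, ∫ ω, Y j ω * Y k ω ∂μ := by
        simp_rw [sq, sum_mul_sum]
        rw [integral_finsetSum s fun j _ => integrable_finsetSum s fun k _ => hint j k]
        exact sum_congr rfl fun j _ => integral_finsetSum s fun k _ => hint j k
    _ ≤ ∑ _j ∈ s, (d * C) := sum_le_sum hrow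
    _ = d * C * #s := by rw [sum_const, nsmul_eq_mul, mul_comm]

theorem tendsto_measure_lt_abs_of_tendsto_integral_abs {Z : ℕ → Ω → ℝ}
    (hZ : ∀ n, Integrable (Z n) μ) (hlim : Tendsto (fun n => ∫ ω, |Z n ω| ∂μ) atTop (nhds 0))
    {ε : ℝ} (hε : 0 < ε) :
    Tendsto (fun n => μ {ω | ε < |Z n ω|}) atTop (nhds 0) := by
  have hL1 : Tendsto (fun n => eLpNorm (Z n - 0) 1 μ) atTop (nhds 0) := by
    have := ENNReal.tendsto_ofReal hlim
    rw [ENNReal.ofReal_zero] at this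
    refine this.congr fun n => ?_
    rw [sub_zero, eLpNorm_one_eq_lintegral_enorm,
      ← ofReal_integral_norm_eq_lintegral_enorm (hZ n)]
    simp only [Real.norm_eq_abs]
  have hmeas : TendstoInMeasure μ Z atTop 0 := tendstoInMeasure_of_tendsto_eLpNorm one_ne_zero
    (fun n => (hZ n).aestronglyMeasurable) aestronglyMeasurable_const hL1
  refine tendsto_of_tendsto_of_tendsto_of_le_of_le tendsto_const_nhds
    (tendstoInMeasure_iff_norm.1 hmeas ε hε) (fun n => zero_le)
    fun n => measure_mono fun ω (hω : ε < |Z n ω|) => ?_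
  rw [Set.mem_ofPred_eq, Pi.zero_apply, sub_zero, Real.norm_eq_abs]
  exact hω.le

end Moments

section Lag

variable {Ω : Type*} [MeasurableSpace Ω] {μ : Measure Ω}

noncomputable def lagProduct (μ : Measure Ω) (X : ℕ → Ω → ℝ) (h j : ℕ) (ω : Ω) : ℝ :=
  X j ω * X (j + h) ω - (∫ ω', X 1 ω' ∂μ) ^ 2

variable {X : ℕ → Ω → ℝ} (hX : ∀ i, Measurable (X i))
  (hindep : iIndepFun X μ) (hid : ∀ i, IdentDistrib (X i) (X 1) μ μ)
  (h4 : Integrable (fun ω => X 1 ω ^ 4) μ)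

include hX in
theorem measurable_lagProduct (h j : ℕ) : Measurable (lagProduct μ X h j) :=
  ((hX j).mul (hX (j + h))).sub_const _

include hid in
theorem identDistrib_pow_four (i : ℕ) :
    IdentDistrib (fun ω => X i ω ^ 4) (fun ω => X 1 ω ^ 4) μ μ :=
  (hid i).comp (measurable_id.pow_const 4)

include hX hid h4 in
theorem memLp_two_mul_of_identDistrib (j k : ℕ) : MemLp (fun ω => X j ω * X k ω) 2 μ := by
  refine (memLp_two_iff_integrable_sq ((hX j).mul (hX k)).aestronglyMeasurable).2 ?_
  refine (((identDistrib_pow_four hid j).integrable_iff.2 h4).add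
    ((identDistrib_pow_four hid k).integrable_iff.2 h4)).mono'
    (((hX j).mul (hX k)).pow_const 2).aestronglyMeasurable (ae_of_all _ fun ω => ?_)
  rw [Real.norm_eq_abs, abs_of_nonneg (sq_nonneg _), Pi.mul_apply, Pi.add_apply]
  nlinarith [sq_nonneg (X j ω ^ 2 - X k ω ^ 2)]

include hX hid h4 in
theorem integral_sq_mul_le_of_identDistrib (j k : ℕ) :
    ∫ ω, (X j ω * X k ω) ^ 2 ∂μ ≤ ∫ ω, X 1 ω ^ 4 ∂μ := by
  have hj := (identDistrib_pow_four hid j).integrable_iff.2 h4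
  have hk := (identDistrib_pow_four hid k).integrable_iff.2 h4
  calc ∫ ω, (X j ω * X k ω) ^ 2 ∂μ ≤ ∫ ω, (X j ω ^ 4 + X k ω ^ 4) / 2 ∂μ :=
        integral_mono (memLp_two_mul_of_identDistrib hX hid h4 j k).integrable_sq
          ((hj.add hk).div_const 2) fun ω => by
            nlinarith [sq_nonneg (X j ω ^ 2 - X k ω ^ 2)]
    _ = ∫ ω, X 1 ω ^ 4 ∂μ := by
        rw [integral_div, integral_add hj hk, (identDistrib_pow_four hid j).integral_eq,
          (identDistrib_pow_four hid k).integral_eq]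
        ring

include hX hindep hid in
theorem integral_mul_eq_sq_integral {i j : ℕ} (hij : i ≠ j) :
    ∫ ω, X i ω * X j ω ∂μ = (∫ ω, X 1 ω ∂μ) ^ 2 := by
  rw [(hindep.indepFun hij).integral_fun_mul_eq_mul_integral (hX i).aestronglyMeasurable
    (hX j).aestronglyMeasurable, (hid i).integral_eq, (hid j).integral_eq, sq]

include hX hindep hid in
theorem lagProduct_eq_sub_integral {h : ℕ} (hh : h ≠ 0) (j : ℕ) :
    lagProduct μ X h j = fun ω => X j ω * X (j + h) ω - ∫ ω', X j ω' * X (j + h) ω' ∂μ := by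
  rw [integral_mul_eq_sq_integral hX hindep hid (by omega : j ≠ j + h)]
  rfl

include hX hid h4 in
theorem memLp_lagProduct [IsFiniteMeasure μ] (h j : ℕ) : MemLp (lagProduct μ X h j) 2 μ :=
  (memLp_two_mul_of_identDistrib hX hid h4 j (j + h)).sub (memLp_const _)

include hX hid h4 in
theorem integrable_cesaro_lagProduct [IsFiniteMeasure μ] (n h : ℕ) :
    Integrable (fun ω => (1 / (n : ℝ)) * ∑ j ∈ Icc 1 (n - h), lagProduct μ X h j ω) μ :=
  (integrable_finsetSum _ fun j _ =>
    (memLp_lagProduct hX hid h4 h j).integrable one_le_two).const_mul _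

variable [IsProbabilityMeasure μ]

include hX hindep hid h4 in
theorem integral_lagProduct {h : ℕ} (hh : h ≠ 0) (j : ℕ) :
    ∫ ω, lagProduct μ X h j ω ∂μ = 0 := by
  rw [lagProduct_eq_sub_integral hX hindep hid hh, integral_sub
    ((memLp_two_mul_of_identDistrib hX hid h4 j (j + h)).integrable one_le_two)
    (integrable_const _), integral_const, probReal_univ, one_smul, sub_self]

include hX hindep hid h4 in
theorem integral_lagProduct_sq_le {h : ℕ} (hh : h ≠ 0) (j : ℕ) :
    ∫ ω, lagProduct μ X h j ω ^ 2 ∂μ ≤ ∫ ω, X 1 ω ^ 4 ∂μ := by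
  have hvar : ∫ ω, lagProduct μ X h j ω ^ 2 ∂μ = Var[X j * X (j + h); μ] := by
    rw [variance_eq_integral ((hX j).mul (hX (j + h))).aemeasurable,
      lagProduct_eq_sub_integral hX hindep hid hh]
    rfl
  rw [hvar]
  exact (variance_le_expectation_sq ((hX j).mul (hX (j + h))).aestronglyMeasurable).trans
    (integral_sq_mul_le_of_identDistrib hX hid h4 j (j + h))

include hX hindep hid h4 in
theorem integral_lagProduct_mul_eq_zero {h j k : ℕ} (hh : h ≠ 0) (hkj : k ≠ j)
    (hkhj : k + h ≠ j) (hkjh : k ≠ j + h) :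
    ∫ ω, lagProduct μ X h j ω * lagProduct μ X h k ω ∂μ = 0 := by
  have hφ : Measurable fun p : ℝ × ℝ => p.1 * p.2 - (∫ ω', X 1 ω' ∂μ) ^ 2 := by fun_prop
  have hind := (hindep.indepFun_prodMk_prodMk hX j (j + h) k (k + h) hkj.symm (by omega)
    (by omega) (by omega)).comp hφ hφ
  calc ∫ ω, lagProduct μ X h j ω * lagProduct μ X h k ω ∂μ
      = (∫ ω, lagProduct μ X h j ω ∂μ) * ∫ ω, lagProduct μ X h k ω ∂μ :=
        hind.integral_fun_mul_eq_mul_integral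
          (measurable_lagProduct hX h j).aestronglyMeasurable
          (measurable_lagProduct hX h k).aestronglyMeasurable
    _ = 0 := by rw [integral_lagProduct hX hindep hid h4 hh, zero_mul]

include hX hindep hid h4 in
theorem integral_sq_sum_lagProduct_le {h : ℕ} (hh : h ≠ 0) (s : Finset ℕ) :
    ∫ ω, (∑ j ∈ s, lagProduct μ X h j ω) ^ 2 ∂μ ≤ 3 * (∫ ω, X 1 ω ^ 4 ∂μ) * #s := by
  have := integral_sq_sum_le_of_integral_mul_eq_zero (memLp_lagProduct hX hid h4 h)
    (integral_lagProduct_sq_le hX hindep hid h4 hh) (fun j => {j - h, j, j + h})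
    (fun j => card_le_three) (fun j k hk => by
      simp only [mem_insert, mem_singleton, not_or] at hk
      exact integral_lagProduct_mul_eq_zero hX hindep hid h4 hh hk.2.1 (by omega) hk.2.2) s
  exact_mod_cast this

include hX hindep hid h4 in
theorem integral_abs_cesaro_lagProduct_le {h : ℕ} (hh : h ≠ 0) (n : ℕ) :
    ∫ ω, |(1 / (n : ℝ)) * ∑ j ∈ Icc 1 (n - h), lagProduct μ X h j ω| ∂μ
      ≤ √(3 * (∫ ω, X 1 ω ^ 4 ∂μ) / n) := by
  have hM : 0 ≤ ∫ ω, X 1 ω ^ 4 ∂μ := integral_nonneg fun ω => by positivity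
  have hcard : (#(Icc 1 (n - h)) : ℝ) ≤ n := by
    rw [Nat.card_Icc]
    exact_mod_cast (by omega : n - h + 1 - 1 ≤ n)
  refine (integral_abs_le_sqrt_integral_sq ((memLp_finsetSum _ fun j _ =>
    memLp_lagProduct hX hid h4 h j).const_mul _)).trans (Real.sqrt_le_sqrt ?_)
  simp_rw [mul_pow]
  rw [integral_const_mul]
  calc (1 / (n : ℝ)) ^ 2 * ∫ ω, (∑ j ∈ Icc 1 (n - h), lagProduct μ X h j ω) ^ 2 ∂μ
      ≤ (1 / (n : ℝ)) ^ 2 * (3 * (∫ ω, X 1 ω ^ 4 ∂μ) * n) := by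
        gcongr
        exact (integral_sq_sum_lagProduct_le hX hindep hid h4 hh _).trans (by gcongr)
    _ = 3 * (∫ ω, X 1 ω ^ 4 ∂μ) / n := by
        rcases eq_or_ne (n : ℝ) 0 with hn | hn
        · simp [hn]
        · field_simp

include hX hindep hid h4 in
theorem integral_abs_weighted_cesaro_lagProduct_le {γ : ℕ → ℝ}
    (hγ : Summable fun h => |γ h|) (n : ℕ) :
    ∫ ω, |∑ h ∈ Icc 1 n, γ h *
        ((1 / (n : ℝ)) * ∑ j ∈ Icc 1 (n - h), lagProduct μ X h j ω)| ∂μ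
      ≤ (∑' h, |γ h|) * √(3 * (∫ ω, X 1 ω ^ 4 ∂μ) / n) := by
  calc _ ≤ ∑ h ∈ Icc 1 n, |γ h| *
        ∫ ω, |(1 / (n : ℝ)) * ∑ j ∈ Icc 1 (n - h), lagProduct μ X h j ω| ∂μ :=
        integral_abs_sum_mul_le _ γ fun h _ => integrable_cesaro_lagProduct hX hid h4 n h
    _ ≤ ∑ h ∈ Icc 1 n, |γ h| * √(3 * (∫ ω, X 1 ω ^ 4 ∂μ) / n) := by
        refine sum_le_sum fun h hh => ?_
        gcongr
        exact integral_abs_cesaro_lagProduct_le hX hindep hid h4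
          (Nat.one_le_iff_ne_zero.1 (mem_Icc.1 hh).1) n
    _ ≤ (∑' h, |γ h|) * √(3 * (∫ ω, X 1 ω ^ 4 ∂μ) / n) := by
        rw [← sum_mul]
        gcongr
        exact hγ.sum_le_tsum _ fun h _ => abs_nonneg (γ h)

end Lag

/-- With `∑_{h≥1} |γ_h| < ∞` and i.i.d. weights with `E w₁⁴ < ∞`,
`∑_{h=1}^n γ_h (1/n) ∑_{j=1}^{n-h} [(w_j-θ)(w_{j+h}-θ) - (E(w₁-θ))²] → 0` in probability. -/
theorem stmt11
    {Ω : Type*} [MeasureSpace Ω] [IsProbabilityMeasure (ℙ : Measure Ω)]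
    (w : ℕ → Ω → ℝ) (γ : ℕ → ℝ)
    (hγ : Summable (fun h => |γ h|))
    (hmeas : ∀ i, Measurable (w i))
    (hindep : iIndepFun w ℙ)
    (hid : ∀ i j : ℕ, IdentDistrib (w i) (w j) ℙ ℙ)
    (hm4 : Integrable (fun ω => (w 1 ω) ^ 4))
    (θ : ℝ) :
    ∀ ε > (0 : ℝ),
      Tendsto (fun n : ℕ =>
          ℙ {ω | ε < |∑ h ∈ Icc 1 n, γ h * ((1 / (n : ℝ)) * ∑ j ∈ Icc 1 (n - h),
                ((w j ω - θ) * (w (j + h) ω - θ) - (∫ ω', w 1 ω' - θ) ^ 2))|})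
        atTop (nhds 0) := by
  intro ε hε
  set X : ℕ → Ω → ℝ := fun i ω => w i ω - θ
  have hX : ∀ i, Measurable (X i) := fun i => (hmeas i).sub_const θ
  have hindepX : iIndepFun X ℙ := hindep.comp _ fun _ => measurable_id.sub_const θ
  have hidX : ∀ i, IdentDistrib (X i) (X 1) ℙ ℙ :=
    fun i => (hid i 1).comp (measurable_id.sub_const θ)
  have h4X : Integrable (fun ω => X 1 ω ^ 4) :=
    integrable_sub_const_pow_four (hmeas 1).aestronglyMeasurable hm4 θ
  set M := ∫ ω, X 1 ω ^ 4
  refine tendsto_measure_lt_abs_of_tendsto_integral_abs (fun n => ?_) ?_ hε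
  · exact integrable_finsetSum _ fun h _ =>
      (integrable_cesaro_lagProduct hX hidX h4X n h).const_mul _
  have hbound : Tendsto (fun n : ℕ => (∑' h, |γ h|) * √(3 * M / n)) atTop (nhds 0) := by
    simpa using ((tendsto_const_div_atTop_nhds_zero_nat (3 * M)).sqrt).const_mul (∑' h, |γ h|)
  exact squeeze_zero (fun n => integral_nonneg fun ω => abs_nonneg _)
    (integral_abs_weighted_cesaro_lagProduct_le hX hindepX hidX h4X hγ) hbound
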